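/- arXiv:2112.14615 — 2 statements merged into one kernel-verified Lean document; each statement's English description precedes it below -/
import Mathlib

section
/- Let K be a compact Hausdorff space equipped with a circular order whose circular topology τ∘ coincides with the topology of K. Then the set of homeomorphisms f of K satisfying sbtw a b c → sbtw (f a) (f b) (f c) for all a, b, c ∈ K is a closed subset of the set of all homeomorphisms of K, both regarded as subsets of C(K,K) with the compact-open topology. -/
/-!
For a homeomorphism `f` and `sbtw a b c`, the points `f a`, `f b`, `f c` are distinct, so
`sbtw (f a) (f b) (f c)` fails exactly when `sbtw (f a) (f c) (f b)`. The set in question is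
therefore an intersection of preimages of the complement of `{(x, y, z) | sbtw x y z}` under the
evaluations `f ↦ (f a, f c, f b)`, which are continuous for the compact-open topology. It remains
to see that strict betweenness is open in `K × K × K`: around the vertices of a positively
oriented triangle there are open arcs, each running from a point of the preceding side to a point
of the following side (or to the neighbouring vertex when that side is an empty arc), such that
any three points taken from them are again positively oriented.
-/

/-- The closed interval `[a,b]∘ = {x | sbtw a x b} ∪ {a, b}` of a circularly ordered set. -/
def cIcc {X : Type*} [CircularOrder X] (a b : X) : Set X :=
  {x | sbtw a x b} ∪ {a, b}

/-- The circular (interval) topology of a circular order: the topology generated by the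
complements of the closed intervals `[a,b]∘`. -/
def circularTopology (X : Type*) [CircularOrder X] : TopologicalSpace X :=
  TopologicalSpace.generateFrom {s : Set X | ∃ a b : X, s = (cIcc a b)ᶜ}

open Set

section CircularOrder

variable {α : Type*} [CircularOrder α] {a b c a' b' c' p q p₀ q₀ u x : α}

theorem SBtw.sbtw.left_ne (h : sbtw a b c) : a ≠ b :=
  fun e => sbtw_irrefl_left (e ▸ h)

theorem SBtw.sbtw.ne_right (h : sbtw a b c) : b ≠ c :=
  fun e => sbtw_irrefl_right (e ▸ h)

theorem SBtw.sbtw.left_ne_right (h : sbtw a b c) : a ≠ c :=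
  fun e => sbtw_irrefl_left_right (e ▸ h)

theorem sbtw_of_sbtw_of_sbtw (h₁ : sbtw u a b) (h₂ : sbtw u b c) : sbtw a b c :=
  (h₂.cyclic_left.trans_right h₁.cyclic_right).cyclic_left.cyclic_left

theorem btw_iff_sbtw_or_eq (hab : a ≠ b) : btw a x b ↔ sbtw a x b ∨ x = a ∨ x = b := by
  refine ⟨fun h => ?_, ?_⟩
  · by_contra! hx
    rcases h.antisymm (btw_iff_not_sbtw.2 hx.1) with h | h | h
    exacts [hx.2.1 h.symm, hx.2.2 h, hab h.symm]
  · rintro (h | rfl | rfl)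
    exacts [h.btw, btw_rfl_left, btw_rfl_right]

theorem sbtw_iff_not_sbtw_swap (hab : a ≠ b) (hbc : b ≠ c) (hca : c ≠ a) :
    sbtw a b c ↔ ¬sbtw a c b := by
  rw [sbtw_iff_not_btw, btw_cyclic, btw_iff_sbtw_or_eq hab]
  simp only [hca, hbc.symm, or_false]

theorem Function.Injective.sbtw_map_iff_not_sbtw_swap {β : Type*} [CircularOrder β]
    {f : α → β} (hf : Function.Injective f) (h : sbtw a b c) :
    sbtw (f a) (f b) (f c) ↔ ¬sbtw (f a) (f c) (f b) :=
  sbtw_iff_not_sbtw_swap (hf.ne h.left_ne) (hf.ne h.ne_right) (hf.ne h.left_ne_right).symm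

/-- Moving each vertex of a positively oriented triangle forward, but not past the next
vertex, keeps it positively oriented. -/
theorem SBtw.sbtw.advance (h : sbtw a b c) (ha : a' = a ∨ sbtw a a' b)
    (hb : b' = b ∨ sbtw b b' c) (hc : c' = c ∨ sbtw c c' a) : sbtw a' b' c' := by
  have h₁ : sbtw a' b c := by
    rcases ha with rfl | ha
    exacts [h, sbtw_of_sbtw_of_sbtw ha h]
  have h₂ : sbtw a' b' c := by
    rcases hb with rfl | hb
    exacts [h₁, (sbtw_of_sbtw_of_sbtw hb h₁.cyclic_left).cyclic_right]
  have hc' : c' = c ∨ sbtw c c' a' := by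
    rcases hc with rfl | hc
    · exact .inl rfl
    rcases ha with rfl | ha
    exacts [.inr hc, .inr (hc.trans_right (ha.trans_right h).cyclic_right)]
  rcases hc' with rfl | hc'
  exacts [h₂, (sbtw_of_sbtw_of_sbtw hc' h₂.cyclic_right).cyclic_left]

theorem SBtw.sbtw.retreat (h : sbtw a b c) (ha : a' = a ∨ sbtw c a' a)
    (hb : b' = b ∨ sbtw a b' b) (hc : c' = c ∨ sbtw b c' c) : sbtw a' b' c' :=
  SBtw.sbtw.advance (α := αᵒᵈ) h hc hb ha

/-- A cut of the arc from `a` to `b`: a point of the open arc, taken as both `q` and `p`, or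
`q = a` and `p = b` when the open arc is empty. -/
def IsCut (a b q p : α) : Prop :=
  (∀ w, ¬sbtw q w p) ∧ (q = p ∧ sbtw a q b ∨ q = a ∧ p = b)

theorem exists_isCut (a b : α) : ∃ q p, IsCut a b q p := by
  by_cases h : ∃ m, sbtw a m b
  · obtain ⟨m, hm⟩ := h
    exact ⟨m, m, fun _ => sbtw_irrefl_left_right, .inl ⟨rfl, hm⟩⟩
  · exact ⟨a, b, fun w hw => h ⟨w, hw⟩, .inr ⟨rfl, rfl⟩⟩

namespace IsCut

theorem left_mem (h : IsCut a b q p) : q = a ∨ sbtw a q b := by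
  rcases h.2 with ⟨-, h⟩ | ⟨h, -⟩
  exacts [.inr h, .inl h]

theorem right_mem (h : IsCut a b q p) : p = b ∨ sbtw a p b := by
  rcases h.2 with ⟨rfl, hq⟩ | ⟨-, hp⟩
  exacts [.inr hq, .inl hp]

theorem eq_or_sbtw_of_sbtw (h : IsCut a b q p) (hq : q = p ∨ sbtw u q p) (hx : sbtw u x p) :
    x = q ∨ sbtw u x q := by
  rcases hq with rfl | hq
  · exact .inr hx
  by_cases hxq : x = q
  · exact .inl hxq
  exact .inr ((sbtw_iff_not_sbtw_swap hx.left_ne hxq hq.left_ne.symm).2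
    fun hqx => h.1 x (sbtw_of_sbtw_of_sbtw hqx hx))

theorem sbtw_of_isCut (h₀ : IsCut c a q₀ p₀) (h : IsCut a b q p) (hcab : sbtw c a b) :
    sbtw q₀ a p ∧ (q = p ∨ sbtw q₀ q p) := by
  have hq₀ : sbtw q₀ a b := hcab.advance h₀.left_mem (.inl rfl) (.inl rfl)
  refine ⟨hq₀.retreat (.inl rfl) (.inl rfl) h.right_mem, ?_⟩
  rcases h.2 with ⟨hqp, -⟩ | ⟨rfl, rfl⟩
  exacts [.inl hqp, .inr hq₀]

end IsCut

theorem SBtw.sbtw.exists_cIoo_forall_sbtw (h : sbtw a b c) :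
    ∃ u₁ v₁ u₂ v₂ u₃ v₃ : α, a ∈ cIoo u₁ v₁ ∧ b ∈ cIoo u₂ v₂ ∧ c ∈ cIoo u₃ v₃ ∧
      ∀ x ∈ cIoo u₁ v₁, ∀ y ∈ cIoo u₂ v₂, ∀ z ∈ cIoo u₃ v₃, sbtw x y z := by
  obtain ⟨q₁, p₁, h₁⟩ := exists_isCut a b
  obtain ⟨q₂, p₂, h₂⟩ := exists_isCut b c
  obtain ⟨q₃, p₃, h₃⟩ := exists_isCut c a
  obtain ⟨ha, hq₁⟩ := h₃.sbtw_of_isCut h₁ h.cyclic_right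
  obtain ⟨hb, hq₂⟩ := h₁.sbtw_of_isCut h₂ h
  obtain ⟨hc, hq₃⟩ := h₂.sbtw_of_isCut h₃ h.cyclic_left
  have hq : sbtw q₁ q₂ q₃ := h.advance h₁.left_mem h₂.left_mem h₃.left_mem
  exact ⟨q₃, p₁, q₁, p₂, q₂, p₃, ha, hb, hc, fun x hx y hy z hz =>
    hq.retreat (h₁.eq_or_sbtw_of_sbtw hq₁ hx) (h₂.eq_or_sbtw_of_sbtw hq₂ hy)
      (h₃.eq_or_sbtw_of_sbtw hq₃ hz)⟩

end CircularOrder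

section CircularTopology

variable {K : Type*} [CircularOrder K] [ts : TopologicalSpace K]

theorem isOpen_cIoo (hts : ts = circularTopology K) (u v : K) : IsOpen (cIoo u v) := by
  -- `cIcc v v = {v}`, whereas Mathlib's `Set.cIcc v v` is everything
  rcases eq_or_ne u v with rfl | huv
  · simp [cIoo, sbtw_irrefl_left_right]
  have hIcc : _root_.cIcc v u = Set.cIcc v u := by
    ext x
    simp only [_root_.cIcc, mem_union, mem_ofPred_eq, mem_insert_iff, mem_singleton_iff,
      mem_cIcc, btw_iff_sbtw_or_eq huv.symm]
  rw [← compl_cIcc, ← hIcc, hts]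
  exact TopologicalSpace.GenerateOpen.basic _ ⟨v, u, rfl⟩

theorem isOpen_setOf_sbtw (hts : ts = circularTopology K) :
    IsOpen {x : K × K × K | sbtw x.1 x.2.1 x.2.2} := by
  refine isOpen_iff_forall_mem_open.2 fun ⟨a, b, c⟩ h => ?_
  obtain ⟨u₁, v₁, u₂, v₂, u₃, v₃, ha, hb, hc, hsbtw⟩ := h.exists_cIoo_forall_sbtw
  exact ⟨cIoo u₁ v₁ ×ˢ cIoo u₂ v₂ ×ˢ cIoo u₃ v₃,
    fun ⟨x, y, z⟩ ⟨hx, hy, hz⟩ => hsbtw x hx y hy z hz,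
    (isOpen_cIoo hts _ _).prod ((isOpen_cIoo hts _ _).prod (isOpen_cIoo hts _ _)), ha, hb, hc⟩

end CircularTopology

theorem cop_homeos_closed_in_homeos_general
    {K : Type*} [CircularOrder K] [ts : TopologicalSpace K]
    (hts : ts = circularTopology K) :
    IsClosed {f : {g : C(K, K) // IsHomeomorph g} |
      ∀ a b c : K, sbtw a b c → sbtw ((f : C(K, K)) a) ((f : C(K, K)) b) ((f : C(K, K)) c)} := by
  simp only [ofPred_forall]
  refine isClosed_iInter fun a => isClosed_iInter fun b => isClosed_iInter fun c =>
    isClosed_iInter fun h => ?_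
  have hcont : Continuous fun f : {g : C(K, K) // IsHomeomorph g} => (f.1 a, f.1 c, f.1 b) := by
    fun_prop
  convert ((isOpen_setOf_sbtw hts).preimage hcont).isClosed_compl using 1
  ext f
  exact f.2.injective.sbtw_map_iff_not_sbtw_swap h

/-- Let `K` be a compact Hausdorff space with a circular order whose circular
topology coincides with its topology. Then the set of homeomorphisms of `K` preserving strict
betweenness is closed in the set of all homeomorphisms of `K`, both viewed as subsets of
`C(K,K)` with the compact-open topology. -/
theorem cop_homeos_closed_in_homeos
    {K : Type*} [CircularOrder K] [ts : TopologicalSpace K]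
    [CompactSpace K] [T2Space K] (hts : ts = circularTopology K) :
    IsClosed {f : {g : C(K, K) // IsHomeomorph g} |
      ∀ a b c : K, sbtw a b c → sbtw ((f : C(K, K)) a) ((f : C(K, K)) b) ((f : C(K, K)) c)} :=
  cop_homeos_closed_in_homeos_general (ts := ts) hts
end

section
/- Let Y be a circularly ordered set, q : X → Y a surjective map, and for each y ∈ Y let ≤_y be a linear order on the fiber q⁻¹(y). Define a ternary relation R on X by: R x₁ x₂ x₃ iff one of the following holds: (1) sbtw (q x₁) (q x₂) (q x₃); (2) q x₁ = q x₂ ≠ q x₃ and x₁ <_y x₂ where y = q x₁; (3) q x₂ = q x₃ ≠ q x₁ and x₂ <_y x₃ where y = q x₂; (4) q x₁ = q x₃ ≠ q x₂ and x₃ <_y x₁ where y = q x₁; (5) q x₁ = q x₂ = q x₃ = y and either x₁ <_y x₂ <_y x₃, or x₂ <_y x₃ <_y x₁, or x₃ <_y x₁ <_y x₂. Then R is a circular order on X, i.e., it satisfies cyclicity (R a b c → R b c a), asymmetry (R a b c → ¬ R b a c), transitivity (R a b c and R a c d imply R a b d), and totality (for pairwise distinct a, b, c: R a b c or R a c b);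 moreover the map q is circular-order preserving: whenever R x₁ x₂ x₃ and q x₁, q x₂, q x₃ are pairwise distinct, sbtw (q x₁) (q x₂) (q x₃) holds, and each fiber q⁻¹(y) is R-convex. -/
/-!
Fix the first point `a` of a triple. According to which of `b`, `c` lie in the fiber of `a`,
`R a b c` is one of four simple relations: the cyclic order induced by `lt` (all three in one
fiber), `lt a b` or `lt c a` (exactly one of them in the fiber), or the lexicographic order
`lexFrom q lt a` (neither), which compares `q b`, `q c` circularly starting from `q a` and breaks
ties by `lt`. Each axiom of a circular order, written with `a` as pivot (asymmetry after one
rotation), then follows case by case from the matching property of these four relations.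
-/

/-- The closed interval `{x | R a x b} ∪ {a, b}` of a ternary relation `R`. -/
def ternIcc {X : Type*} (R : X → X → X → Prop) (a b : X) : Set X :=
  {x | R a x b} ∪ {a, b}

/-- A subset `S` is convex for a ternary relation `R` if for all `a, b ∈ S` at least one of
the intervals `[a,b]`, `[b,a]` is contained in `S`. -/
def TernConvex {X : Type*} (R : X → X → X → Prop) (S : Set X) : Prop :=
  ∀ a ∈ S, ∀ b ∈ S, ternIcc R a b ⊆ S ∨ ternIcc R b a ⊆ S

theorem sbtw_or_sbtw_of_ne {Y : Type*} [CircularOrder Y] {a b c : Y}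
    (hab : a ≠ b) (hbc : b ≠ c) (hca : c ≠ a) : sbtw a b c ∨ sbtw a c b := by
  rw [sbtw_iff_not_btw, sbtw_iff_not_btw, ← not_and_or]
  rintro ⟨hcba, hbca⟩
  rcases hcba.antisymm (btw_cyclic_right hbca) with h | h | h
  exacts [hbc h.symm, hab h.symm, hca h.symm]

section CyclicSbtw

variable {X : Type*} {lt : X → X → Prop} {a b c d : X}

def cyclicSbtw (lt : X → X → Prop) (a b c : X) : Prop :=
  (lt a b ∧ lt b c) ∨ (lt b c ∧ lt c a) ∨ (lt c a ∧ lt a b)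

theorem cyclicSbtw.cyclic (h : cyclicSbtw lt a b c) : cyclicSbtw lt b c a := by
  unfold cyclicSbtw at *; tauto

theorem cyclicSbtw_or_cyclicSbtw (hab : lt a b ∨ lt b a) (hbc : lt b c ∨ lt c b)
    (hca : lt c a ∨ lt a c) : cyclicSbtw lt a b c ∨ cyclicSbtw lt a c b := by
  unfold cyclicSbtw; tauto

variable [IsStrictOrder X lt]

theorem cyclicSbtw.not_swap (h : cyclicSbtw lt a b c) : ¬ cyclicSbtw lt a c b := by
  have hasymm : ∀ {x y}, lt x y → ¬ lt y x := asymm_of lt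
  have htrans : ∀ {x y z}, lt x y → lt y z → lt x z := trans_of lt
  unfold cyclicSbtw at *
  grind

theorem cyclicSbtw.trans (h : cyclicSbtw lt a b c) (h' : cyclicSbtw lt a c d) :
    cyclicSbtw lt a b d := by
  have hasymm : ∀ {x y}, lt x y → ¬ lt y x := asymm_of lt
  have htrans : ∀ {x y z}, lt x y → lt y z → lt x z := trans_of lt
  unfold cyclicSbtw at *
  grind

theorem cyclicSbtw.lt_left_of_lt (h : cyclicSbtw lt a b c) (hac : lt a c) : lt a b := by
  rcases h with ⟨hab, -⟩ | ⟨-, hca⟩ | ⟨hca, -⟩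
  exacts [hab, absurd hca (asymm_of lt hac), absurd hca (asymm_of lt hac)]

theorem cyclicSbtw.lt_right_of_lt (h : cyclicSbtw lt a b c) (hba : lt b a) : lt c a := by
  rcases h with ⟨hab, -⟩ | ⟨-, hca⟩ | ⟨hca, -⟩
  exacts [absurd hab (asymm_of lt hba), hca, hca]

end CyclicSbtw

section LexFrom

variable {X Y : Type*} [CircularOrder Y] {q : X → Y} {lt : X → X → Prop} {a b c d : X}

def lexFrom (q : X → Y) (lt : X → X → Prop) (a b c : X) : Prop :=
  sbtw (q a) (q b) (q c) ∨ (q b = q c ∧ lt b c)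

theorem lexFrom_or_lexFrom (htotal : ∀ x y, q x = q y → x = y ∨ lt x y ∨ lt y x)
    (hab : q a ≠ q b) (hac : q a ≠ q c) (hbc : b ≠ c) :
    lexFrom q lt a b c ∨ lexFrom q lt a c b := by
  by_cases hqbc : q b = q c
  · rcases htotal b c hqbc with h | h | h
    exacts [absurd h hbc, Or.inl (Or.inr ⟨hqbc, h⟩), Or.inr (Or.inr ⟨hqbc.symm, h⟩)]
  · exact (sbtw_or_sbtw_of_ne hab hqbc hac.symm).imp Or.inl Or.inl

variable [IsStrictOrder X lt]

theorem lexFrom.not_swap (h : lexFrom q lt a b c) : ¬ lexFrom q lt a c b := by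
  rintro (h' | ⟨hcb, h'⟩)
  · rcases h with h | ⟨hbc, -⟩
    · exact sbtw_asymm h h'.cyclic_left
    · exact sbtw_irrefl_right (hbc ▸ h')
  · rcases h with h | ⟨-, h⟩
    · exact sbtw_irrefl_right (hcb ▸ h)
    · exact asymm_of lt h h'

theorem lexFrom.trans (h : lexFrom q lt a b c) (h' : lexFrom q lt a c d) : lexFrom q lt a b d := by
  rcases h with h | ⟨hbc, h⟩ <;> rcases h' with h' | ⟨hcd, h'⟩
  · exact Or.inl (sbtw_trans_right h h')
  · exact Or.inl (hcd ▸ h)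
  · exact Or.inl (hbc ▸ h')
  · exact Or.inr ⟨hbc.trans hcd, trans_of lt h h'⟩

end LexFrom

section FiberSbtw

variable {X Y : Type*} [CircularOrder Y] {q : X → Y} {lt : X → X → Prop} {a b c d x : X}

def fiberSbtw (q : X → Y) (lt : X → X → Prop) (a b c : X) : Prop :=
  sbtw (q a) (q b) (q c) ∨
    (q a = q b ∧ q b ≠ q c ∧ lt a b) ∨
    (q b = q c ∧ q c ≠ q a ∧ lt b c) ∨
    (q a = q c ∧ q a ≠ q b ∧ lt c a) ∨
    (q a = q b ∧ q b = q c ∧ cyclicSbtw lt a b c)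

theorem fiberSbtw_iff_of_eq_of_eq (hab : q a = q b) (hac : q a = q c) :
    fiberSbtw q lt a b c ↔ cyclicSbtw lt a b c := by
  simp [fiberSbtw, ← hab, ← hac, sbtw_irrefl]

theorem fiberSbtw_iff_of_eq_of_ne (hab : q a = q b) (hac : q a ≠ q c) :
    fiberSbtw q lt a b c ↔ lt a b := by
  simp [fiberSbtw, ← hab, hac, Ne.symm hac, sbtw_irrefl_left]

theorem fiberSbtw_iff_of_ne_of_eq (hab : q a ≠ q b) (hac : q a = q c) :
    fiberSbtw q lt a b c ↔ lt c a := by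
  simp [fiberSbtw, ← hac, hab, Ne.symm hab, sbtw_irrefl_left_right]

theorem fiberSbtw_iff_of_ne_of_ne (hab : q a ≠ q b) (hac : q a ≠ q c) :
    fiberSbtw q lt a b c ↔ lexFrom q lt a b c := by
  simp [fiberSbtw, lexFrom, hab, hac, Ne.symm hac]

theorem fiberSbtw.cyclic (h : fiberSbtw q lt a b c) : fiberSbtw q lt b c a := by
  rcases h with h | ⟨hab, hbc, h⟩ | ⟨hbc, hca, h⟩ | ⟨hac, hab, h⟩ | ⟨hab, hbc, h⟩
  · exact Or.inl h.cyclic_left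
  · exact Or.inr (Or.inr (Or.inr (Or.inl ⟨hab.symm, hbc, h⟩)))
  · exact Or.inr (Or.inl ⟨hbc, hca, h⟩)
  · exact Or.inr (Or.inr (Or.inl ⟨hac.symm, hab, h⟩))
  · exact Or.inr (Or.inr (Or.inr (Or.inr ⟨hbc, hab.trans hbc |>.symm, h.cyclic⟩)))

theorem sbtw_of_fiberSbtw (h : fiberSbtw q lt a b c) (hab : q a ≠ q b) (hbc : q b ≠ q c)
    (hca : q c ≠ q a) : sbtw (q a) (q b) (q c) := by
  rw [fiberSbtw_iff_of_ne_of_ne hab hca.symm] at h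
  exact h.resolve_right fun h => hbc h.1

theorem fiberSbtw_or_fiberSbtw (htotal : ∀ x y, q x = q y → x = y ∨ lt x y ∨ lt y x)
    (hab : a ≠ b) (hbc : b ≠ c) (hca : c ≠ a) :
    fiberSbtw q lt a b c ∨ fiberSbtw q lt a c b := by
  have hlt : ∀ {x y}, x ≠ y → q x = q y → lt x y ∨ lt y x := fun hxy hq =>
    (htotal _ _ hq).resolve_left hxy
  rcases eq_or_ne (q a) (q b) with hqab | hqab <;> rcases eq_or_ne (q a) (q c) with hqac | hqac <;>
    simp (disch := assumption) only [fiberSbtw_iff_of_eq_of_eq, fiberSbtw_iff_of_eq_of_ne,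
      fiberSbtw_iff_of_ne_of_eq, fiberSbtw_iff_of_ne_of_ne]
  · exact cyclicSbtw_or_cyclicSbtw (hlt hab hqab) (hlt hbc (hqab.symm.trans hqac))
      (hlt hca hqac.symm)
  · exact hlt hab hqab
  · exact (hlt hca.symm hqac).symm
  · exact lexFrom_or_lexFrom htotal hqab hqac hbc

theorem fiber_eq_of_fiberSbtw (h : fiberSbtw q lt a x b) (hab : q a = q b) (hba : ¬ lt b a) :
    q x = q a := by
  by_contra hax
  exact hba ((fiberSbtw_iff_of_ne_of_eq (Ne.symm hax) hab).1 h)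

variable [IsStrictOrder X lt]

theorem fiberSbtw.not_swap (h : fiberSbtw q lt a b c) : ¬ fiberSbtw q lt a c b := by
  rcases eq_or_ne (q a) (q b) with hab | hab <;> rcases eq_or_ne (q a) (q c) with hac | hac <;>
    simp (disch := assumption) only [fiberSbtw_iff_of_eq_of_eq, fiberSbtw_iff_of_eq_of_ne,
      fiberSbtw_iff_of_ne_of_eq, fiberSbtw_iff_of_ne_of_ne] at h ⊢
  · exact h.not_swap
  · exact asymm_of lt h
  · exact asymm_of lt h
  · exact h.not_swap

theorem fiberSbtw.not_swap_left (h : fiberSbtw q lt a b c) : ¬ fiberSbtw q lt b a c :=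
  fun h' => h.not_swap h'.cyclic

theorem fiberSbtw.trans (h : fiberSbtw q lt a b c) (h' : fiberSbtw q lt a c d) :
    fiberSbtw q lt a b d := by
  rcases eq_or_ne (q a) (q b) with hab | hab <;> rcases eq_or_ne (q a) (q c) with hac | hac <;>
    rcases eq_or_ne (q a) (q d) with had | had <;>
    simp (disch := assumption) only [fiberSbtw_iff_of_eq_of_eq, fiberSbtw_iff_of_eq_of_ne,
      fiberSbtw_iff_of_ne_of_eq, fiberSbtw_iff_of_ne_of_ne] at h h' ⊢
  · exact h.trans h'
  · exact h.lt_left_of_lt h'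
  · exact Or.inr (Or.inr ⟨h', h⟩)
  · exact h
  · exact h'.lt_right_of_lt h
  · exact absurd h' (asymm_of lt h)
  · exact h'
  · exact h.trans h'

theorem ternConvex_fiberSbtw_fiber (y : Y) : TernConvex (fiberSbtw q lt) (q ⁻¹' {y}) := by
  have hIcc : ∀ {u v}, q u = y → q v = y → ¬ lt v u →
      ternIcc (fiberSbtw q lt) u v ⊆ q ⁻¹' {y} := by
    rintro u v hu hv hvu x (hx | rfl | rfl)
    · exact (fiber_eq_of_fiberSbtw hx (hu.trans hv.symm) hvu).trans hu
    · exact hu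
    · exact hv
  intro a ha b hb
  by_cases hba : lt b a
  · exact Or.inr (hIcc hb ha (asymm_of lt hba))
  · exact Or.inl (hIcc ha hb hba)

end FiberSbtw

theorem fibered_circular_order_general
    {X Y : Type*} [CircularOrder Y] (q : X → Y)
    (lt : X → X → Prop)
    (hirr : ∀ x : X, ¬ lt x x)
    (hlttrans : ∀ x y z : X, lt x y → lt y z → lt x z)
    (hlttotal : ∀ x₁ x₂ : X, q x₁ = q x₂ → x₁ = x₂ ∨ lt x₁ x₂ ∨ lt x₂ x₁)
    (R : X → X → X → Prop)
    (hR : ∀ x₁ x₂ x₃ : X, R x₁ x₂ x₃ ↔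
      (sbtw (q x₁) (q x₂) (q x₃) ∨
        (q x₁ = q x₂ ∧ q x₂ ≠ q x₃ ∧ lt x₁ x₂) ∨
        (q x₂ = q x₃ ∧ q x₃ ≠ q x₁ ∧ lt x₂ x₃) ∨
        (q x₁ = q x₃ ∧ q x₁ ≠ q x₂ ∧ lt x₃ x₁) ∨
        (q x₁ = q x₂ ∧ q x₂ = q x₃ ∧
          ((lt x₁ x₂ ∧ lt x₂ x₃) ∨ (lt x₂ x₃ ∧ lt x₃ x₁) ∨ (lt x₃ x₁ ∧ lt x₁ x₂))))) :
    (∀ a b c : X, R a b c → R b c a) ∧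
    (∀ a b c : X, R a b c → ¬ R b a c) ∧
    (∀ a b c d : X, R a b c → R a c d → R a b d) ∧
    (∀ a b c : X, a ≠ b → b ≠ c → c ≠ a → R a b c ∨ R a c b) ∧
    (∀ x₁ x₂ x₃ : X, R x₁ x₂ x₃ → q x₁ ≠ q x₂ → q x₂ ≠ q x₃ → q x₃ ≠ q x₁ →
      sbtw (q x₁) (q x₂) (q x₃)) ∧
    (∀ y : Y, TernConvex R (q ⁻¹' {y})) := by
  obtain rfl : R = fiberSbtw q lt := funext fun a => funext fun b => funext fun c =>
    propext (hR a b c)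
  have : IsStrictOrder X lt := { irrefl := hirr, trans := hlttrans }
  exact ⟨fun _ _ _ => fiberSbtw.cyclic, fun _ _ _ => fiberSbtw.not_swap_left,
    fun _ _ _ _ => fiberSbtw.trans, fun _ _ _ => fiberSbtw_or_fiberSbtw hlttotal,
    fun _ _ _ => sbtw_of_fiberSbtw, ternConvex_fiberSbtw_fiber⟩

/-- Let `Y` be a circularly ordered set, `q : X → Y` surjective, and `lt` a
strict linear order on each fiber of `q`. Then the lexicographic-type ternary relation `R` on
`X` (defined case-by-case from `sbtw` on `Y` and `lt` on the fibers) is a circular order: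
cyclic, asymmetric, transitive and total on pairwise distinct triples; moreover `q` is
circular-order preserving and every fiber of `q` is `R`-convex. -/
theorem fibered_circular_order
    {X Y : Type*} [CircularOrder Y] (q : X → Y) (hq : Function.Surjective q)
    (lt : X → X → Prop)
    (hfib : ∀ x₁ x₂ : X, lt x₁ x₂ → q x₁ = q x₂)
    (hirr : ∀ x : X, ¬ lt x x)
    (hlttrans : ∀ x y z : X, lt x y → lt y z → lt x z)
    (hlttotal : ∀ x₁ x₂ : X, q x₁ = q x₂ → x₁ = x₂ ∨ lt x₁ x₂ ∨ lt x₂ x₁)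
    (R : X → X → X → Prop)
    (hR : ∀ x₁ x₂ x₃ : X, R x₁ x₂ x₃ ↔
      (sbtw (q x₁) (q x₂) (q x₃) ∨
        (q x₁ = q x₂ ∧ q x₂ ≠ q x₃ ∧ lt x₁ x₂) ∨
        (q x₂ = q x₃ ∧ q x₃ ≠ q x₁ ∧ lt x₂ x₃) ∨
        (q x₁ = q x₃ ∧ q x₁ ≠ q x₂ ∧ lt x₃ x₁) ∨
        (q x₁ = q x₂ ∧ q x₂ = q x₃ ∧
          ((lt x₁ x₂ ∧ lt x₂ x₃) ∨ (lt x₂ x₃ ∧ lt x₃ x₁) ∨ (lt x₃ x₁ ∧ lt x₁ x₂))))) :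
    (∀ a b c : X, R a b c → R b c a) ∧
    (∀ a b c : X, R a b c → ¬ R b a c) ∧
    (∀ a b c d : X, R a b c → R a c d → R a b d) ∧
    (∀ a b c : X, a ≠ b → b ≠ c → c ≠ a → R a b c ∨ R a c b) ∧
    (∀ x₁ x₂ x₃ : X, R x₁ x₂ x₃ → q x₁ ≠ q x₂ → q x₂ ≠ q x₃ → q x₃ ≠ q x₁ →
      sbtw (q x₁) (q x₂) (q x₃)) ∧
    (∀ y : Y, TernConvex R (q ⁻¹' {y})) :=
  fibered_circular_order_general q lt hirr hlttrans hlttotal R hR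
end
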